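/- Let X be a differentiable family of Hermitian rank-1 projectors with raising/lowering operators Π±X = ((∂±X)·X·(∂∓X))/tr((∂±X)·X·(∂∓X)) (or 0 if the numerator vanishes). Then Π±X is again a Hermitian idempotent matrix, it projects onto the vector (∂±X)·X·e, and X·(Π±X) = 0, i.e., X and Π±X are orthogonal projectors. -/

import Mathlib

open Matrix

/-- Entrywise partial derivative of a matrix family in the first real coordinate. -/
noncomputable def pd1 {N : ℕ} (f : ℝ × ℝ → Matrix (Fin N) (Fin N) ℂ) (p : ℝ × ℝ) :
    Matrix (Fin N) (Fin N) ℂ :=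
  Matrix.of fun i j => fderiv ℝ (fun q => f q i j) p (1, 0)

/-- Entrywise partial derivative of a matrix family in the second real coordinate. -/
noncomputable def pd2 {N : ℕ} (f : ℝ × ℝ → Matrix (Fin N) (Fin N) ℂ) (p : ℝ × ℝ) :
    Matrix (Fin N) (Fin N) ℂ :=
  Matrix.of fun i j => fderiv ℝ (fun q => f q i j) p (0, 1)

/-- `∂₊ = (∂₁ - i∂₂)/2` for matrix families. -/
noncomputable def pdp {N : ℕ} (f : ℝ × ℝ → Matrix (Fin N) (Fin N) ℂ) (p : ℝ × ℝ) :
    Matrix (Fin N) (Fin N) ℂ :=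
  ((1 : ℂ) / 2) • (pd1 f p - Complex.I • pd2 f p)

/-- `∂₋ = (∂₁ + i∂₂)/2` for matrix families. -/
noncomputable def pdm {N : ℕ} (f : ℝ × ℝ → Matrix (Fin N) (Fin N) ℂ) (p : ℝ × ℝ) :
    Matrix (Fin N) (Fin N) ℂ :=
  ((1 : ℂ) / 2) • (pd1 f p + Complex.I • pd2 f p)

/-- The raising operator `Π₊X`. -/
noncomputable def Pip {N : ℕ} (X : ℝ × ℝ → Matrix (Fin N) (Fin N) ℂ) (p : ℝ × ℝ) :
    Matrix (Fin N) (Fin N) ℂ :=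
  if Matrix.trace (pdp X p * X p * pdm X p) = 0 then 0
  else (Matrix.trace (pdp X p * X p * pdm X p))⁻¹ • (pdp X p * X p * pdm X p)

/-- The lowering operator `Π₋X`. -/
noncomputable def Pim {N : ℕ} (X : ℝ × ℝ → Matrix (Fin N) (Fin N) ℂ) (p : ℝ × ℝ) :
    Matrix (Fin N) (Fin N) ℂ :=
  if Matrix.trace (pdm X p * X p * pdp X p) = 0 then 0
  else (Matrix.trace (pdm X p * X p * pdp X p))⁻¹ • (pdm X p * X p * pdp X p)

/-!
Differentiating `X² = X` gives `∂X = ∂X·X + X·∂X`, hence `X·∂X·X = 0`, and `∂∓X = (∂±X)ᴴ` because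
`X` is Hermitian. An idempotent of trace one has rank one, `X = u wᵀ`, so `X C X = tr (C X) • X` for
every `C`. For `M = ∂±X·X·(∂±X)ᴴ` this gives `M² = tr M • M`, so `M / tr M` is a Hermitian
idempotent; it is killed by `X` on the left, and its range lies on the line through `∂±X·u`.
-/

theorem IsIdempotentElem.mul_mul_eq_zero {R : Type*} [NonUnitalRing R] {Y A : R}
    (hY : IsIdempotentElem Y) (hA : A * Y + Y * A = A) : Y * A * Y = 0 := by
  rw [mul_assoc, eq_sub_of_add_eq hA, mul_sub, ← mul_assoc, hY.eq, sub_self]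

namespace Matrix

variable {K n : Type*} [Fintype n]

theorem exists_eq_vecMulVec_of_isIdempotentElem_of_trace_eq_one [Field K] [CharZero K]
    [DecidableEq n] {Y : Matrix n n K} (hY : IsIdempotentElem Y) (htr : Y.trace = 1) :
    ∃ u w : n → K, Y = vecMulVec u w := by
  have hrange : Module.finrank K (LinearMap.range Y.toLin') = 1 := by
    have hproj := LinearMap.IsIdempotentElem.isProj_range _ (hY.map Matrix.toLinAlgEquiv')
    exact_mod_cast hproj.trace.symm.trans (Y.trace_toLin'_eq.trans htr)
  obtain ⟨u, -, hu⟩ := finrank_eq_one_iff'.mp hrange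
  choose w hw using fun j => hu ⟨Y.col j, Pi.single j 1, by simp⟩
  refine ⟨u, w, ext fun i j => ?_⟩
  have hij := congrFun (congrArg Subtype.val (hw j)) i
  simp only [SetLike.val_smul, Pi.smul_apply, smul_eq_mul, col_apply] at hij
  rw [vecMulVec_apply, mul_comm, hij]

theorem vecMulVec_mul_mul_vecMulVec [CommSemiring K] (u w : n → K) (C : Matrix n n K) :
    vecMulVec u w * C * vecMulVec u w = trace (C * vecMulVec u w) • vecMulVec u w := by
  rw [vecMulVec_mul, vecMulVec_mul_vecMulVec, mul_vecMulVec, trace_vecMulVec, vecMulVec_smul,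
    ← dotProduct_mulVec, dotProduct_comm]

theorem mul_vecMulVec_mul_self [CommSemiring K] (A B : Matrix n n K) (u w : n → K) :
    A * vecMulVec u w * B * (A * vecMulVec u w * B) =
      trace (A * vecMulVec u w * B) • (A * vecMulVec u w * B) := by
  calc A * vecMulVec u w * B * (A * vecMulVec u w * B)
      = A * (vecMulVec u w * (B * A) * vecMulVec u w) * B := by simp only [Matrix.mul_assoc]
    _ = _ := by
      rw [vecMulVec_mul_mul_vecMulVec, Matrix.mul_smul, Matrix.smul_mul,
        trace_mul_comm (A * vecMulVec u w) B, Matrix.mul_assoc B]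

theorem exists_mul_vecMulVec_mul_mulVec_eq_smul [Field K] (A B : Matrix n n K) (u w e : n → K)
    (he : (A * vecMulVec u w) *ᵥ e ≠ 0) (v : n → K) :
    ∃ k : K, (A * vecMulVec u w * B) *ᵥ v = k • (A * vecMulVec u w) *ᵥ e := by
  have hcol (x : n → K) : (A * vecMulVec u w) *ᵥ x = (w ⬝ᵥ x) • A *ᵥ u := by
    rw [mul_vecMulVec, vecMulVec_mulVec, op_smul_eq_smul]
  have hwe : w ⬝ᵥ e ≠ 0 := fun h => he (by rw [hcol, h, zero_smul])
  refine ⟨(w ⬝ᵥ B *ᵥ v) / (w ⬝ᵥ e), ?_⟩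
  rw [← mulVec_mulVec, hcol, hcol, smul_smul, div_mul_cancel₀ _ hwe]

theorem isIdempotentElem_inv_trace_smul [Field K] {M : Matrix n n K}
    (hM : M * M = M.trace • M) : IsIdempotentElem (M.trace⁻¹ • M) := by
  rcases eq_or_ne M.trace 0 with h | h
  · simp [IsIdempotentElem, h]
  · rw [IsIdempotentElem, smul_mul_smul_comm, hM, smul_smul, mul_assoc, inv_mul_cancel₀ h,
      mul_one]

theorem IsHermitian.inv_trace_smul [Field K] [StarRing K] {M : Matrix n n K}
    (hM : M.IsHermitian) : (M.trace⁻¹ • M).IsHermitian := by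
  rw [IsHermitian, conjTranspose_smul, star_inv₀, ← trace_conjTranspose, hM.eq]

-- `Π±X p` is `raisingProjector (X p) (∂±X p)`: the `if` in `Pip` and `Pim` is redundant, since
-- `0⁻¹ = 0` already makes the zero-trace case the zero matrix.
noncomputable def raisingProjector [Field K] [StarRing K] (Y A : Matrix n n K) : Matrix n n K :=
  (A * Y * Aᴴ).trace⁻¹ • (A * Y * Aᴴ)

variable [Field K] [StarRing K] {Y A : Matrix n n K}

theorem isIdempotentElem_raisingProjector [CharZero K] [DecidableEq n]
    (hY : IsIdempotentElem Y) (htr : Y.trace = 1) : IsIdempotentElem (raisingProjector Y A) := by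
  obtain ⟨u, w, rfl⟩ := exists_eq_vecMulVec_of_isIdempotentElem_of_trace_eq_one hY htr
  exact isIdempotentElem_inv_trace_smul (mul_vecMulVec_mul_self _ _ _ _)

theorem isHermitian_raisingProjector (hY : Y.IsHermitian) :
    (raisingProjector Y A).IsHermitian := by
  refine IsHermitian.inv_trace_smul ?_
  rw [IsHermitian, conjTranspose_mul, conjTranspose_mul, conjTranspose_conjTranspose, hY.eq,
    Matrix.mul_assoc]

theorem mul_raisingProjector_eq_zero (hY : IsIdempotentElem Y) (hA : A * Y + Y * A = A) :
    Y * raisingProjector Y A = 0 := by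
  have hYAY : Y * A * Y = 0 := hY.mul_mul_eq_zero hA
  rw [raisingProjector, Matrix.mul_smul, ← Matrix.mul_assoc, ← Matrix.mul_assoc, hYAY,
    Matrix.zero_mul, smul_zero]

theorem exists_raisingProjector_mulVec_eq_smul [CharZero K] [DecidableEq n]
    (hY : IsIdempotentElem Y) (htr : Y.trace = 1) {e : n → K} (he : (A * Y) *ᵥ e ≠ 0) (v : n → K) :
    ∃ k : K, raisingProjector Y A *ᵥ v = k • (A * Y) *ᵥ e := by
  obtain ⟨u, w, rfl⟩ := exists_eq_vecMulVec_of_isIdempotentElem_of_trace_eq_one hY htr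
  obtain ⟨k, hk⟩ := exists_mul_vecMulVec_mul_mulVec_eq_smul A Aᴴ u w e he v
  exact ⟨_ * k, by rw [raisingProjector, smul_mulVec, hk, smul_smul]⟩

end Matrix

section EntrywiseDeriv

variable {E n : Type*} [NormedAddCommGroup E] [NormedSpace ℝ E]

noncomputable def entrywiseDeriv (X : E → Matrix n n ℂ) (p v : E) : Matrix n n ℂ :=
  Matrix.of fun i j => fderiv ℝ (fun q => X q i j) p v

theorem conjTranspose_entrywiseDeriv (X : E → Matrix n n ℂ) (p v : E) :
    (entrywiseDeriv X p v)ᴴ = entrywiseDeriv (fun q => (X q)ᴴ) p v := by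
  ext i j
  have hconj := Complex.conjCLE.comp_fderiv (f := fun q => X q j i) (x := p)
  simp only [Function.comp_def, Complex.conjCLE_apply] at hconj
  simp [entrywiseDeriv, hconj]

theorem isHermitian_entrywiseDeriv {X : E → Matrix n n ℂ} (hherm : ∀ q, (X q)ᴴ = X q)
    (p v : E) : (entrywiseDeriv X p v).IsHermitian := by
  simp only [IsHermitian, conjTranspose_entrywiseDeriv, hherm]

variable [Fintype n]

theorem entrywiseDeriv_mul {X Z : E → Matrix n n ℂ} {p : E}
    (hX : ∀ i j, DifferentiableAt ℝ (fun q => X q i j) p)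
    (hZ : ∀ i j, DifferentiableAt ℝ (fun q => Z q i j) p) (v : E) :
    entrywiseDeriv (fun q => X q * Z q) p v =
      entrywiseDeriv X p v * Z p + X p * entrywiseDeriv Z p v := by
  ext i j
  have hij : HasFDerivAt (fun q => (X q * Z q) i j)
      (∑ k, (X p i k • fderiv ℝ (fun q => Z q k j) p +
        Z p k j • fderiv ℝ (fun q => X q i k) p)) p := by
    simp only [mul_apply]
    exact HasFDerivAt.fun_sum fun k _ => (hX i k).hasFDerivAt.mul (hZ k j).hasFDerivAt
  rw [entrywiseDeriv, of_apply, hij.fderiv]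
  simp only [_root_.sum_apply, _root_.add_apply, _root_.smul_apply, smul_eq_mul,
    Matrix.add_apply, mul_apply, entrywiseDeriv, of_apply, ← Finset.sum_add_distrib]
  exact Finset.sum_congr rfl fun k _ => by ring

theorem entrywiseDeriv_mul_add_mul_entrywiseDeriv {X : E → Matrix n n ℂ} {p : E}
    (hX : ∀ i j, DifferentiableAt ℝ (fun q => X q i j) p) (hidem : ∀ q, X q * X q = X q)
    (v : E) : entrywiseDeriv X p v * X p + X p * entrywiseDeriv X p v = entrywiseDeriv X p v := by
  simpa only [hidem] using (entrywiseDeriv_mul hX hX v).symm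

end EntrywiseDeriv

section RaisingLowering

variable {N : ℕ} {X : ℝ × ℝ → Matrix (Fin N) (Fin N) ℂ}

theorem conjTranspose_pdp (hherm : ∀ q, (X q)ᴴ = X q) (p : ℝ × ℝ) : (pdp X p)ᴴ = pdm X p := by
  have h1 : (pd1 X p)ᴴ = pd1 X p := isHermitian_entrywiseDeriv hherm p (1, 0)
  have h2 : (pd2 X p)ᴴ = pd2 X p := isHermitian_entrywiseDeriv hherm p (0, 1)
  simp [pdp, pdm, h1, h2, Complex.conj_I]

theorem conjTranspose_pdm (hherm : ∀ q, (X q)ᴴ = X q) (p : ℝ × ℝ) : (pdm X p)ᴴ = pdp X p := by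
  rw [← conjTranspose_pdp hherm, conjTranspose_conjTranspose]

theorem pdp_mul_add_mul_pdp (hdiff : ∀ i j, Differentiable ℝ fun q => X q i j)
    (hidem : ∀ q, X q * X q = X q) (p : ℝ × ℝ) : pdp X p * X p + X p * pdp X p = pdp X p := by
  have h1 : pd1 X p * X p + X p * pd1 X p = pd1 X p :=
    entrywiseDeriv_mul_add_mul_entrywiseDeriv (fun i j => hdiff i j p) hidem (1, 0)
  have h2 : pd2 X p * X p + X p * pd2 X p = pd2 X p :=
    entrywiseDeriv_mul_add_mul_entrywiseDeriv (fun i j => hdiff i j p) hidem (0, 1)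
  simp only [pdp, Matrix.smul_mul, Matrix.mul_smul, Matrix.sub_mul, Matrix.mul_sub]
  linear_combination (norm := module) ((1 : ℂ) / 2) • h1 - ((1 : ℂ) / 2 * Complex.I) • h2

theorem pdm_mul_add_mul_pdm (hdiff : ∀ i j, Differentiable ℝ fun q => X q i j)
    (hidem : ∀ q, X q * X q = X q) (p : ℝ × ℝ) : pdm X p * X p + X p * pdm X p = pdm X p := by
  have h1 : pd1 X p * X p + X p * pd1 X p = pd1 X p :=
    entrywiseDeriv_mul_add_mul_entrywiseDeriv (fun i j => hdiff i j p) hidem (1, 0)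
  have h2 : pd2 X p * X p + X p * pd2 X p = pd2 X p :=
    entrywiseDeriv_mul_add_mul_entrywiseDeriv (fun i j => hdiff i j p) hidem (0, 1)
  simp only [pdm, Matrix.smul_mul, Matrix.mul_smul, Matrix.add_mul, Matrix.mul_add]
  linear_combination (norm := module) ((1 : ℂ) / 2) • h1 + ((1 : ℂ) / 2 * Complex.I) • h2

theorem Pip_eq_raisingProjector (hherm : ∀ q, (X q)ᴴ = X q) (p : ℝ × ℝ) :
    Pip X p = raisingProjector (X p) (pdp X p) := by
  rw [Pip, raisingProjector, conjTranspose_pdp hherm]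
  split_ifs with h <;> simp [h]

theorem Pim_eq_raisingProjector (hherm : ∀ q, (X q)ᴴ = X q) (p : ℝ × ℝ) :
    Pim X p = raisingProjector (X p) (pdm X p) := by
  rw [Pim, raisingProjector, conjTranspose_pdm hherm]
  split_ifs with h <;> simp [h]

end RaisingLowering

/-- For a differentiable family of Hermitian rank-1 projectors `X`, the operators `Π±X`
are Hermitian idempotent matrices, project onto the vector `(∂±X)·X·e` (when this vector
is nonzero), and are orthogonal to `X`: `X · (Π±X) = 0`. -/
theorem raising_lowering_projector {N : ℕ} (X : ℝ × ℝ → Matrix (Fin N) (Fin N) ℂ)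
    (e : Fin N → ℂ)
    (hdiff : ∀ i j, Differentiable ℝ fun q => X q i j)
    (hidem : ∀ p, X p * X p = X p) (hherm : ∀ p, (X p)ᴴ = X p)
    (htr : ∀ p, Matrix.trace (X p) = 1) :
    ∀ p : ℝ × ℝ,
      (Pip X p * Pip X p = Pip X p ∧ (Pip X p)ᴴ = Pip X p ∧ X p * Pip X p = 0 ∧
        ((pdp X p * X p).mulVec e ≠ 0 →
          ∀ v : Fin N → ℂ, ∃ k : ℂ, (Pip X p).mulVec v = k • (pdp X p * X p).mulVec e)) ∧
      (Pim X p * Pim X p = Pim X p ∧ (Pim X p)ᴴ = Pim X p ∧ X p * Pim X p = 0 ∧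
        ((pdm X p * X p).mulVec e ≠ 0 →
          ∀ v : Fin N → ℂ, ∃ k : ℂ, (Pim X p).mulVec v = k • (pdm X p * X p).mulVec e)) := by
  intro p
  have hY : IsIdempotentElem (X p) := hidem p
  rw [Pip_eq_raisingProjector hherm, Pim_eq_raisingProjector hherm]
  exact
    ⟨⟨isIdempotentElem_raisingProjector hY (htr p), isHermitian_raisingProjector (hherm p),
      mul_raisingProjector_eq_zero hY (pdp_mul_add_mul_pdp hdiff hidem p),
      fun he => exists_raisingProjector_mulVec_eq_smul hY (htr p) he⟩,
    ⟨isIdempotentElem_raisingProjector hY (htr p), isHermitian_raisingProjector (hherm p),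
      mul_raisingProjector_eq_zero hY (pdm_mul_add_mul_pdm hdiff hidem p),
      fun he => exists_raisingProjector_mulVec_eq_smul hY (htr p) he⟩⟩
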